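/- arXiv:1801.01031 — 6 statements merged into one kernel-verified Lean document; each statement's English description precedes it below -/
import Mathlib

section
/- Let {A^{p,q}} be a double complex and fix integers p,q. Assume: (H1) for every ζ ∈ A^{p+1,q-1} with ∂∂̄ζ = 0 there exists μ ∈ A^{p,q-1} with ∂∂̄μ = ∂̄ζ; and (H2) for every η ∈ A^{p-1,q+1} with ∂̄∂η = 0 there exists ν ∈ A^{p-1,q} with ∂̄∂ν = ∂η. Then for any ζ ∈ A^{p+1,q-1} and η ∈ A^{p-1,q+1}, the system of equations ∂x = ∂̄ζ, ∂̄x = ∂η has a solution x ∈ A^{p,q} if and only if ∂∂̄ζ = 0 and ∂̄∂η = 0; moreover, when these conditions hold, x = ∂̄μ + ∂ν is a solution, where μ and ν are given by (H1) and (H2). -/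
/-- Let `{A^{p,q}}` be a double complex and fix integers `p, q` (bidegrees
are written relative to `(p+1, q+1)` so that all indices appear in natural `+1` form; thus
`ζ ∈ A^{p+2,q}`, `η ∈ A^{p,q+2}`, `x ∈ A^{p+1,q+1}`, `μ ∈ A^{p+1,q}`, `ν ∈ A^{p,q+1}`).
Assume: (H1) for every `ζ` with `∂∂̄ζ = 0` there exists `μ` with `∂∂̄μ = ∂̄ζ`; and
(H2) for every `η` with `∂̄∂η = 0` there exists `ν` with `∂̄∂ν = ∂η`.  Then for any `ζ, η`,
the system `∂x = ∂̄ζ`, `∂̄x = ∂η` has a solution `x` if and only if `∂∂̄ζ = 0` and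
`∂̄∂η = 0`; moreover, when these conditions hold, `x = ∂̄μ + ∂ν` is a solution whenever
`∂∂̄μ = ∂̄ζ` and `∂̄∂ν = ∂η` (as supplied by (H1) and (H2)). -/
theorem solve_conjugate_system
    {A : ℤ → ℤ → Type*} [∀ p q, AddCommGroup (A p q)] [∀ p q, Module ℂ (A p q)]
    (d1 : ∀ p q, A p q →ₗ[ℂ] A (p + 1) q) (d2 : ∀ p q, A p q →ₗ[ℂ] A p (q + 1))
    (hd1 : ∀ p q (x : A p q), d1 (p + 1) q (d1 p q x) = 0)
    (hd2 : ∀ p q (x : A p q), d2 p (q + 1) (d2 p q x) = 0)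
    (hanti : ∀ p q (x : A p q), d1 p (q + 1) (d2 p q x) + d2 (p + 1) q (d1 p q x) = 0)
    (p q : ℤ)
    (H1 : ∀ ζ : A (p + 1 + 1) q,
      d1 (p + 1 + 1) (q + 1) (d2 (p + 1 + 1) q ζ) = 0 →
      ∃ μ : A (p + 1) q, d1 (p + 1) (q + 1) (d2 (p + 1) q μ) = d2 (p + 1 + 1) q ζ)
    (H2 : ∀ η : A p (q + 1 + 1),
      d2 (p + 1) (q + 1 + 1) (d1 p (q + 1 + 1) η) = 0 →
      ∃ ν : A p (q + 1), d2 (p + 1) (q + 1) (d1 p (q + 1) ν) = d1 p (q + 1 + 1) η) :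
    ∀ (ζ : A (p + 1 + 1) q) (η : A p (q + 1 + 1)),
      ((∃ x : A (p + 1) (q + 1),
          d1 (p + 1) (q + 1) x = d2 (p + 1 + 1) q ζ ∧
          d2 (p + 1) (q + 1) x = d1 p (q + 1 + 1) η) ↔
        (d1 (p + 1 + 1) (q + 1) (d2 (p + 1 + 1) q ζ) = 0 ∧
          d2 (p + 1) (q + 1 + 1) (d1 p (q + 1 + 1) η) = 0)) ∧
      (d1 (p + 1 + 1) (q + 1) (d2 (p + 1 + 1) q ζ) = 0 →
        d2 (p + 1) (q + 1 + 1) (d1 p (q + 1 + 1) η) = 0 →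
        ∀ (μ : A (p + 1) q) (ν : A p (q + 1)),
          d1 (p + 1) (q + 1) (d2 (p + 1) q μ) = d2 (p + 1 + 1) q ζ →
          d2 (p + 1) (q + 1) (d1 p (q + 1) ν) = d1 p (q + 1 + 1) η →
          d1 (p + 1) (q + 1) (d2 (p + 1) q μ + d1 p (q + 1) ν) = d2 (p + 1 + 1) q ζ ∧
          d2 (p + 1) (q + 1) (d2 (p + 1) q μ + d1 p (q + 1) ν) = d1 p (q + 1 + 1) η) := by
  intro ζ η
  have key : ∀ (μ : A (p + 1) q) (ν : A p (q + 1)),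
      d1 (p + 1) (q + 1) (d2 (p + 1) q μ + d1 p (q + 1) ν) =
        d1 (p + 1) (q + 1) (d2 (p + 1) q μ) ∧
      d2 (p + 1) (q + 1) (d2 (p + 1) q μ + d1 p (q + 1) ν) =
        d2 (p + 1) (q + 1) (d1 p (q + 1) ν) := by
    intro μ ν
    constructor
    · rw [map_add, hd1, add_zero]
    · rw [map_add, hd2, zero_add]
  constructor
  · constructor
    · rintro ⟨x, hx1, hx2⟩
      constructor
      · rw [← hx1]; exact hd1 _ _ x
      · rw [← hx2]; exact hd2 _ _ x
    · rintro ⟨h1, h2⟩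
      obtain ⟨μ, hμ⟩ := H1 ζ h1
      obtain ⟨ν, hν⟩ := H2 η h2
      exact ⟨d2 (p + 1) q μ + d1 p (q + 1) ν,
        (key μ ν).1.trans hμ, (key μ ν).2.trans hν⟩
  · intro _ _ μ ν hμ hν
    exact ⟨(key μ ν).1.trans hμ, (key μ ν).2.trans hν⟩
end

section
/- Let ∂, ∂̄, ∂*, ∂̄* be linear endomorphisms of a complex vector space V satisfying ∂² = ∂̄² = 0, ∂∂̄ + ∂̄∂ = 0, (∂*)² = (∂̄*)² = 0 and ∂*∂̄* + ∂̄*∂* = 0. Then □_BC ∘ (∂∂̄) = (∂∂̄) ∘ (∂∂̄)* ∘ (∂∂̄) = (∂∂̄) ∘ □_A; in particular the Bott-Chern Laplacian intertwines with the Aeppli Laplacian through ∂∂̄. -/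
/-- Let `∂, ∂̄, ∂*, ∂̄*` be linear endomorphisms of a complex vector space `V`
satisfying `∂² = ∂̄² = 0`, `∂∂̄ + ∂̄∂ = 0`, `(∂*)² = (∂̄*)² = 0` and `∂*∂̄* + ∂̄*∂* = 0`.
Then `□_BC ∘ (∂∂̄) = (∂∂̄) ∘ (∂∂̄)* ∘ (∂∂̄) = (∂∂̄) ∘ □_A`, where
`□_BC = ∂∂̄∂̄*∂* + ∂̄*∂*∂∂̄ + ∂̄*∂∂*∂̄ + ∂*∂̄∂̄*∂ + ∂̄*∂̄ + ∂*∂`,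
`□_A = ∂*∂̄*∂̄∂ + ∂̄∂∂*∂̄* + ∂̄∂*∂∂̄* + ∂∂̄*∂̄∂* + ∂̄∂̄* + ∂∂*` and `(∂∂̄)* := ∂̄*∂*`;
in particular the Bott-Chern Laplacian intertwines with the Aeppli Laplacian through `∂∂̄`. -/
theorem boxBC_intertwine_boxA {V : Type*} [AddCommGroup V] [Module ℂ V]
    (d d' ds ds' : Module.End ℂ V)
    (hd : d * d = 0) (hd' : d' * d' = 0) (hdd' : d * d' + d' * d = 0)
    (hds : ds * ds = 0) (hds' : ds' * ds' = 0) (hdsds' : ds * ds' + ds' * ds = 0) :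
    (d * d' * ds' * ds + ds' * ds * d * d' + ds' * d * ds * d' + ds * d' * ds' * d
        + ds' * d' + ds * d) * (d * d')
      = (d * d') * (ds' * ds) * (d * d') ∧
    (d * d') * (ds' * ds) * (d * d')
      = (d * d') *
        (ds * ds' * d' * d + d' * d * ds * ds' + d' * ds * d * ds' + d * ds' * d' * ds
          + d' * ds' + d * ds) := by
  have h1 : d' * d = -(d * d') := eq_neg_of_add_eq_zero_right hdd'
  have h2 : ds * ds' = -(ds' * ds) := eq_neg_of_add_eq_zero_left hdsds'
  have e1 : ∀ x : Module.End ℂ V, d * (d * x) = 0 := fun x => by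
    rw [← mul_assoc, hd, zero_mul]
  have e2 : ∀ x : Module.End ℂ V, d' * (d' * x) = 0 := fun x => by
    rw [← mul_assoc, hd', zero_mul]
  have e3 : ∀ x : Module.End ℂ V, ds * (ds * x) = 0 := fun x => by
    rw [← mul_assoc, hds, zero_mul]
  have e4 : ∀ x : Module.End ℂ V, ds' * (ds' * x) = 0 := fun x => by
    rw [← mul_assoc, hds', zero_mul]
  have s1 : ∀ x : Module.End ℂ V, d' * (d * x) = -(d * (d' * x)) := fun x => by
    rw [← mul_assoc, ← mul_assoc, h1, neg_mul]
  have s2 : ∀ x : Module.End ℂ V, ds * (ds' * x) = -(ds' * (ds * x)) := fun x => by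
    rw [← mul_assoc, ← mul_assoc, h2, neg_mul]
  constructor <;>
    simp [mul_add, add_mul, mul_assoc, e1, e2, e3, e4, s1, s2, hd, hd', hds, hds', h1, h2]
end

section
/- Let H be a finite-dimensional complex inner product space and ∂, ∂̄ linear endomorphisms of H satisfying ∂² = ∂̄² = 0 and ∂∂̄ + ∂̄∂ = 0, with adjoints ∂*, ∂̄*. Then ker □_BC = ker ∂ ∩ ker ∂̄ ∩ ker((∂∂̄)*), and H admits the orthogonal direct sum decomposition H = ker □_BC ⊕ im(∂∂̄) ⊕ (im ∂* + im ∂̄*), whose three summands are pairwise orthogonal. -/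
open LinearMap

/-- The Bott-Chern Laplacian
`□_BC = ∂∂̄∂̄*∂* + ∂̄*∂*∂∂̄ + ∂̄*∂∂*∂̄ + ∂*∂̄∂̄*∂ + ∂̄*∂̄ + ∂*∂`. -/
noncomputable def bottChernLaplacian {H : Type*} [NormedAddCommGroup H] [InnerProductSpace ℂ H]
    [FiniteDimensional ℂ H] (d d' : Module.End ℂ H) : Module.End ℂ H :=
  d * d' * adjoint d' * adjoint d + adjoint d' * adjoint d * d * d'
    + adjoint d' * d * adjoint d * d' + adjoint d * d' * adjoint d' * d
    + adjoint d' * d' + adjoint d * d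

section Aux

variable {H : Type*} [NormedAddCommGroup H] [InnerProductSpace ℂ H] [FiniteDimensional ℂ H]

lemma adj_mul (A B : Module.End ℂ H) : adjoint (A * B) = adjoint B * adjoint A := by
  rw [Module.End.mul_eq_comp, adjoint_comp, Module.End.mul_eq_comp]

lemma inner_adj_mul_self (A : Module.End ℂ H) (x : H) :
    (inner ℂ ((adjoint A * A) x) x : ℂ) = (‖A x‖ : ℂ) ^ 2 := by
  rw [Module.End.mul_apply, adjoint_inner_left, inner_self_eq_norm_sq_to_K]
  norm_cast

lemma box_eq (d d' : Module.End ℂ H) :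
    bottChernLaplacian d d'
      = adjoint (adjoint d' * adjoint d) * (adjoint d' * adjoint d)
        + adjoint (d * d') * (d * d')
        + adjoint (adjoint d * d') * (adjoint d * d')
        + adjoint (adjoint d' * d) * (adjoint d' * d)
        + adjoint d' * d' + adjoint d * d := by
  simp only [bottChernLaplacian, adj_mul, adjoint_adjoint, mul_assoc]

end Aux

set_option maxHeartbeats 1000000 in
/-- Let `H` be a finite-dimensional complex inner product space and `∂, ∂̄`
linear endomorphisms of `H` satisfying `∂² = ∂̄² = 0` and `∂∂̄ + ∂̄∂ = 0`, with adjoints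
`∂*, ∂̄*`.  Then `ker □_BC = ker ∂ ∩ ker ∂̄ ∩ ker((∂∂̄)*)` (where `(∂∂̄)* = ∂̄*∂*`), and `H`
admits the orthogonal direct sum decomposition
`H = ker □_BC ⊕ im(∂∂̄) ⊕ (im ∂* + im ∂̄*)`, whose summands are pairwise orthogonal. -/
theorem hodge_decomposition_boxBC {H : Type*} [NormedAddCommGroup H] [InnerProductSpace ℂ H]
    [FiniteDimensional ℂ H] (d d' : Module.End ℂ H)
    (hd : d * d = 0) (hd' : d' * d' = 0) (hdd' : d * d' + d' * d = 0) :
    LinearMap.ker (bottChernLaplacian d d')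
      = LinearMap.ker d ⊓ LinearMap.ker d' ⊓ LinearMap.ker (adjoint d' * adjoint d) ∧
    LinearMap.ker (bottChernLaplacian d d') ⊔ LinearMap.range (d * d')
        ⊔ (LinearMap.range (adjoint d) ⊔ LinearMap.range (adjoint d')) = ⊤ ∧
    (∀ x ∈ LinearMap.ker (bottChernLaplacian d d'), ∀ y ∈ LinearMap.range (d * d'),
      (inner ℂ x y : ℂ) = 0) ∧
    (∀ x ∈ LinearMap.ker (bottChernLaplacian d d'),
      ∀ z ∈ LinearMap.range (adjoint d) ⊔ LinearMap.range (adjoint d'),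
      (inner ℂ x z : ℂ) = 0) ∧
    (∀ y ∈ LinearMap.range (d * d'),
      ∀ z ∈ LinearMap.range (adjoint d) ⊔ LinearMap.range (adjoint d'),
      (inner ℂ y z : ℂ) = 0) := by
  have P : ∀ a : H, ‖a‖ ^ 2 = 0 → a = 0 := fun a ha =>
    norm_eq_zero.mp (pow_eq_zero_iff two_ne_zero |>.mp ha)
  -- characterization of the kernel
  have key : ∀ x : H, bottChernLaplacian d d' x = 0 ↔
      d x = 0 ∧ d' x = 0 ∧ adjoint d' (adjoint d x) = 0 := by
    intro x
    constructor
    · intro hx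
      have h0 : (inner ℂ (bottChernLaplacian d d' x) x : ℂ) = 0 := by
        rw [hx, inner_zero_left]
      rw [box_eq] at h0
      simp only [LinearMap.add_apply, inner_add_left, inner_adj_mul_self] at h0
      have hre : (‖(adjoint d' * adjoint d) x‖ ^ 2 + ‖(d * d') x‖ ^ 2
          + ‖(adjoint d * d') x‖ ^ 2 + ‖(adjoint d' * d) x‖ ^ 2
          + ‖d' x‖ ^ 2 + ‖d x‖ ^ 2 : ℝ) = 0 := by exact_mod_cast h0
      have n1 := sq_nonneg ‖(adjoint d' * adjoint d) x‖
      have n2 := sq_nonneg ‖(d * d') x‖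
      have n3 := sq_nonneg ‖(adjoint d * d') x‖
      have n4 := sq_nonneg ‖(adjoint d' * d) x‖
      have n5 := sq_nonneg ‖d' x‖
      have n6 := sq_nonneg ‖d x‖
      refine ⟨P _ (by linarith), P _ (by linarith), ?_⟩
      have := P _ (show ‖(adjoint d' * adjoint d) x‖ ^ 2 = 0 by linarith)
      simpa [Module.End.mul_apply] using this
    · rintro ⟨h1, h2, h3⟩
      simp only [bottChernLaplacian, LinearMap.add_apply, Module.End.mul_apply, h1, h2, h3, map_zero]
      simp
  have hker : LinearMap.ker (bottChernLaplacian d d')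
      = LinearMap.ker d ⊓ LinearMap.ker d' ⊓ LinearMap.ker (adjoint d' * adjoint d) := by
    ext x
    simp only [mem_ker, Submodule.mem_inf, Module.End.mul_apply]
    rw [key x]; tauto
  have mem_ker_iff : ∀ x, x ∈ LinearMap.ker (bottChernLaplacian d d') ↔
      d x = 0 ∧ d' x = 0 ∧ adjoint d' (adjoint d x) = 0 := fun x => by
    rw [mem_ker, key]
  -- orthogonality 1
  have o1 : ∀ x ∈ LinearMap.ker (bottChernLaplacian d d'), ∀ y ∈ LinearMap.range (d * d'),
      (inner ℂ x y : ℂ) = 0 := by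
    rintro x hx y hy
    obtain ⟨w, rfl⟩ := hy
    obtain ⟨-, -, h3⟩ := (mem_ker_iff x).mp hx
    rw [Module.End.mul_apply, ← adjoint_inner_left d, ← adjoint_inner_left d', h3, inner_zero_left]
  -- orthogonality 2
  have o2 : ∀ x ∈ LinearMap.ker (bottChernLaplacian d d'),
      ∀ z ∈ LinearMap.range (adjoint d) ⊔ LinearMap.range (adjoint d'),
      (inner ℂ x z : ℂ) = 0 := by
    rintro x hx z hz
    obtain ⟨h1, h2, -⟩ := (mem_ker_iff x).mp hx
    obtain ⟨a, ha, b, hb, rfl⟩ := Submodule.mem_sup.mp hz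
    obtain ⟨u, rfl⟩ := ha
    obtain ⟨v, rfl⟩ := hb
    rw [inner_add_right, adjoint_inner_right, adjoint_inner_right, h1, h2]
    simp
  -- orthogonality 3
  have hcomm : d' * d = -(d * d') :=
    eq_neg_of_add_eq_zero_left (by rw [add_comm]; exact hdd')
  have hz2 : d' * (d * d') = 0 := by
    rw [← mul_assoc, hcomm, neg_mul, mul_assoc, hd', mul_zero, neg_zero]
  have o3 : ∀ y ∈ LinearMap.range (d * d'),
      ∀ z ∈ LinearMap.range (adjoint d) ⊔ LinearMap.range (adjoint d'),
      (inner ℂ y z : ℂ) = 0 := by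
    rintro y hy z hz
    obtain ⟨w, rfl⟩ := hy
    obtain ⟨a, ha, b, hb, rfl⟩ := Submodule.mem_sup.mp hz
    obtain ⟨u, rfl⟩ := ha
    obtain ⟨v, rfl⟩ := hb
    have e1 : d ((d * d') w) = 0 := by
      have : (d * (d * d')) w = 0 := by rw [← mul_assoc, hd, zero_mul]; rfl
      simpa [Module.End.mul_apply] using this
    have e2 : d' ((d * d') w) = 0 := by
      have : (d' * (d * d')) w = 0 := by rw [hz2]; rfl
      simpa [Module.End.mul_apply] using this
    rw [inner_add_right, adjoint_inner_right, adjoint_inner_right, e1, e2]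
    simp
  -- the decomposition
  have hrw : d * d' = adjoint (adjoint d' * adjoint d) := by
    rw [adj_mul, adjoint_adjoint, adjoint_adjoint]
  have htop : LinearMap.ker (bottChernLaplacian d d') ⊔ LinearMap.range (d * d')
      ⊔ (LinearMap.range (adjoint d) ⊔ LinearMap.range (adjoint d')) = ⊤ := by
    rw [← Submodule.orthogonal_eq_bot_iff, Submodule.eq_bot_iff]
    intro x hx
    have hS := (Submodule.mem_orthogonal _ x).mp hx
    have hdx : d x = 0 := by
      have h := hS (adjoint d (d x))
        (Submodule.mem_sup_right (Submodule.mem_sup_left (LinearMap.mem_range_self _ _)))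
      rw [adjoint_inner_left] at h
      exact inner_self_eq_zero.mp h
    have hdx' : d' x = 0 := by
      have h := hS (adjoint d' (d' x))
        (Submodule.mem_sup_right (Submodule.mem_sup_right (LinearMap.mem_range_self _ _)))
      rw [adjoint_inner_left] at h
      exact inner_self_eq_zero.mp h
    have hadj : adjoint d' (adjoint d x) = 0 := by
      have h := hS ((d * d') (adjoint d' (adjoint d x)))
        (Submodule.mem_sup_left (Submodule.mem_sup_right (LinearMap.mem_range_self _ _)))
      rw [hrw, adjoint_inner_left, Module.End.mul_apply] at h
      exact inner_self_eq_zero.mp h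
    have hxker : x ∈ LinearMap.ker (bottChernLaplacian d d') :=
      (mem_ker_iff x).mpr ⟨hdx, hdx', hadj⟩
    have := hS x (Submodule.mem_sup_left (Submodule.mem_sup_left hxker))
    exact inner_self_eq_zero.mp this
  exact ⟨hker, htop, o1, o2, o3⟩
end

section
/- Let H be a finite-dimensional complex inner product space and ∂, ∂̄ linear endomorphisms of H satisfying ∂² = ∂̄² = 0 and ∂∂̄ + ∂̄∂ = 0, with adjoints ∂*, ∂̄*. Suppose y ∈ H is such that the equation ∂∂̄x = y admits a solution. Then x₀ := (∂∂̄)* G_BC y is a solution of ∂∂̄x = y, and among all solutions x₀ is the unique one of minimal norm. -/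
open LinearMap

section Aux

variable {H : Type*} [NormedAddCommGroup H] [InnerProductSpace ℂ H] [FiniteDimensional ℂ H]

local notation "⟪" x ", " y "⟫" => @inner ℂ _ _ x y

lemma bcl_selfAdjoint (d d' : Module.End ℂ H) :
    LinearMap.adjoint (bottChernLaplacian d d') = bottChernLaplacian d d' := by
  simp only [bottChernLaplacian, ← LinearMap.star_eq_adjoint, star_add, star_mul, star_star,
    mul_assoc]

lemma bcl_ker (d d' : Module.End ℂ H) (k : H) (hk : bottChernLaplacian d d' k = 0) :
    adjoint d' (adjoint d k) = 0 := by
  have h0 : ⟪bottChernLaplacian d d' k, k⟫ = 0 := by rw [hk, inner_zero_left]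
  have e1 : ⟪d (d' (adjoint d' (adjoint d k))), k⟫ = (‖adjoint d' (adjoint d k)‖ : ℂ) ^ 2 := by
    rw [← adjoint_inner_right d, ← adjoint_inner_right d', inner_self_eq_norm_sq_to_K]
    rfl
  have e2 : ⟪adjoint d' (adjoint d (d (d' k))), k⟫ = (‖d (d' k)‖ : ℂ) ^ 2 := by
    rw [adjoint_inner_left, adjoint_inner_left, inner_self_eq_norm_sq_to_K]
    rfl
  have e3 : ⟪adjoint d' (d (adjoint d (d' k))), k⟫ = (‖adjoint d (d' k)‖ : ℂ) ^ 2 := by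
    rw [adjoint_inner_left, ← adjoint_inner_right d, inner_self_eq_norm_sq_to_K]
    rfl
  have e4 : ⟪adjoint d (d' (adjoint d' (d k))), k⟫ = (‖adjoint d' (d k)‖ : ℂ) ^ 2 := by
    rw [adjoint_inner_left, ← adjoint_inner_right d', inner_self_eq_norm_sq_to_K]
    rfl
  have e5 : ⟪adjoint d' (d' k), k⟫ = (‖d' k‖ : ℂ) ^ 2 := by
    rw [adjoint_inner_left, inner_self_eq_norm_sq_to_K]
    rfl
  have e6 : ⟪adjoint d (d k), k⟫ = (‖d k‖ : ℂ) ^ 2 := by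
    rw [adjoint_inner_left, inner_self_eq_norm_sq_to_K]
    rfl
  simp only [bottChernLaplacian, LinearMap.add_apply, Module.End.mul_apply] at h0
  rw [inner_add_left, inner_add_left, inner_add_left, inner_add_left, inner_add_left,
    e1, e2, e3, e4, e5, e6] at h0
  have hre : (‖adjoint d' (adjoint d k)‖ ^ 2 + ‖d (d' k)‖ ^ 2 + ‖adjoint d (d' k)‖ ^ 2
      + ‖adjoint d' (d k)‖ ^ 2 + ‖d' k‖ ^ 2 + ‖d k‖ ^ 2 : ℝ) = 0 := by
    exact_mod_cast h0
  have hsq : ‖adjoint d' (adjoint d k)‖ ^ 2 = 0 := by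
    nlinarith [sq_nonneg ‖d (d' k)‖, sq_nonneg ‖adjoint d (d' k)‖, sq_nonneg ‖adjoint d' (d k)‖,
      sq_nonneg ‖d' k‖, sq_nonneg ‖d k‖]
  exact norm_eq_zero.mp (pow_eq_zero_iff (two_ne_zero) |>.mp hsq)

end Aux

/-- Let `H` be a finite-dimensional complex inner product space and `∂, ∂̄`
linear endomorphisms of `H` satisfying `∂² = ∂̄² = 0` and `∂∂̄ + ∂̄∂ = 0`, with adjoints
`∂*, ∂̄*`.  Let `G` be the Green's operator of `□_BC`, i.e. the (unique) linear endomorphism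
vanishing on `ker □_BC` and satisfying `G □_BC x = x − P x` for all `x`, where `P` is the
orthogonal projection onto `ker □_BC`.  Suppose `y ∈ H` is such that the equation `∂∂̄x = y`
admits a solution.  Then `x₀ := (∂∂̄)* G y` (where `(∂∂̄)* = ∂̄*∂*`) is a solution of
`∂∂̄x = y`, and among all solutions `x₀` is the unique one of minimal norm. -/
theorem popovici_minimal_solution {H : Type*} [NormedAddCommGroup H] [InnerProductSpace ℂ H]
    [FiniteDimensional ℂ H] (d d' : Module.End ℂ H)
    (hd : d * d = 0) (hd' : d' * d' = 0) (hdd' : d * d' + d' * d = 0)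
    (G : Module.End ℂ H)
    (hGker : ∀ x ∈ LinearMap.ker (bottChernLaplacian d d'), G x = 0)
    (hG : ∀ x : H, G (bottChernLaplacian d d' x)
      = x - (Submodule.orthogonalProjection (LinearMap.ker (bottChernLaplacian d d')) x : H))
    (y : H) (hy : ∃ x, (d * d') x = y) :
    (d * d') ((adjoint d' * adjoint d) (G y)) = y ∧
    ∀ z, (d * d') z = y → z ≠ (adjoint d' * adjoint d) (G y) →
      ‖(adjoint d' * adjoint d) (G y)‖ < ‖z‖ := by
  obtain ⟨x, hx⟩ := hy
  set L := bottChernLaplacian d d' with hLdef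
  have hsa : LinearMap.adjoint L = L := by rw [hLdef]; exact bcl_selfAdjoint d d'
  -- products annihilating (d * d')
  have h1 : d * (d * d') = 0 := by rw [← mul_assoc, hd, zero_mul]
  have h2 : d' * (d * d') = 0 := by
    have hne : d' * d = -(d * d') := eq_neg_of_add_eq_zero_left (by rw [add_comm]; exact hdd')
    calc d' * (d * d') = (d' * d) * d' := by rw [mul_assoc]
      _ = (-(d * d')) * d' := by rw [hne]
      _ = -(d * (d' * d')) := by rw [neg_mul, mul_assoc]
      _ = 0 := by rw [hd', mul_zero, neg_zero]
  -- y is orthogonal to ker L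
  have hyk : ∀ k ∈ LinearMap.ker L, (inner ℂ k y) = 0 := by
    intro k hk
    have hk' : bottChernLaplacian d d' k = 0 := by
      rw [← hLdef]; exact LinearMap.mem_ker.mp hk
    have hk0 : adjoint d' (adjoint d k) = 0 := bcl_ker d d' k hk'
    rw [← hx, Module.End.mul_apply, ← adjoint_inner_left, ← adjoint_inner_left, hk0,
      inner_zero_left]
  have hy_mem : y ∈ (LinearMap.ker L)ᗮ := (Submodule.mem_orthogonal _ _).mpr hyk
  have hrange : LinearMap.range L = (LinearMap.ker L)ᗮ := by
    apply Submodule.eq_of_le_of_finrank_eq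
    · rintro _ ⟨w, rfl⟩
      rw [Submodule.mem_orthogonal]
      intro k hk
      have hadj : (inner ℂ k (L w)) = inner ℂ (L k) w := by
        conv_lhs => rw [← hsa]
        exact adjoint_inner_right _ _ _
      rw [hadj, LinearMap.mem_ker.mp hk, inner_zero_left]
    · have ha := LinearMap.finrank_range_add_finrank_ker L
      have hb := Submodule.finrank_add_finrank_orthogonal (LinearMap.ker L)
      omega
  obtain ⟨x', hx'⟩ : y ∈ LinearMap.range L := by rw [hrange]; exact hy_mem
  have hPx' : L ((Submodule.orthogonalProjection (LinearMap.ker L) x' : H)) = 0 :=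
    LinearMap.mem_ker.mp (SetLike.coe_mem _)
  have hLGy : L (G y) = y := by
    have h := hG x'
    rw [hx'] at h
    rw [h, map_sub, hx', hPx', sub_zero]
  set u := G y with hu
  set s := (adjoint d' * adjoint d) u with hs
  set r := y - (d * d') s with hr
  have hrdecomp : r = adjoint d' (adjoint d (d (d' u)) + d (adjoint d (d' u)) + d' u)
      + adjoint d (d' (adjoint d' (d u)) + d u) := by
    rw [hr, hs, ← hLGy, hLdef]
    simp only [bottChernLaplacian, LinearMap.add_apply, Module.End.mul_apply, map_add]
    abel
  have hdy : d y = 0 := by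
    rw [← hx]
    simpa using LinearMap.congr_fun h1 x
  have hd'y : d' y = 0 := by
    rw [← hx]
    simpa using LinearMap.congr_fun h2 x
  have hdr : d r = 0 := by
    rw [hr, map_sub, hdy, zero_sub, neg_eq_zero]
    simpa using LinearMap.congr_fun h1 s
  have hd'r : d' r = 0 := by
    rw [hr, map_sub, hd'y, zero_sub, neg_eq_zero]
    simpa using LinearMap.congr_fun h2 s
  have hr0 : r = 0 := by
    have hinner : (inner ℂ r r) = 0 := by
      have hsplit : (inner ℂ r r)
          = inner ℂ (d' r) (adjoint d (d (d' u)) + d (adjoint d (d' u)) + d' u)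
            + inner ℂ (d r) (d' (adjoint d' (d u)) + d u) := by
        conv_lhs => rw [hrdecomp]
        rw [inner_add_right, adjoint_inner_right, adjoint_inner_right, ← hrdecomp]
      rw [hsplit, hdr, hd'r, inner_zero_left, inner_zero_left, add_zero]
    exact inner_self_eq_zero.mp hinner
  have hpart1 : (d * d') s = y := by
    have : y - (d * d') s = 0 := by rw [← hr]; exact hr0
    exact (sub_eq_zero.mp this).symm
  refine ⟨hpart1, ?_⟩
  intro z hz hne
  have horth : (inner ℂ s (z - s)) = 0 := by
    have hs1 : (inner ℂ s (z - s)) = inner ℂ u ((d * d') (z - s)) := by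
      rw [hs, Module.End.mul_apply, Module.End.mul_apply, adjoint_inner_left, adjoint_inner_left]
    rw [hs1, map_sub, hz, hpart1, sub_self, inner_zero_right]
  have hnorm : ‖z‖ ^ 2 = ‖s‖ ^ 2 + ‖z - s‖ ^ 2 := by
    have hzeq : z = s + (z - s) := by abel
    conv_lhs => rw [hzeq]
    rw [norm_add_sq (𝕜 := ℂ), horth]
    simp
  have hpos : 0 < ‖z - s‖ ^ 2 := pow_pos (norm_pos_iff.mpr (sub_ne_zero.mpr hne)) 2
  have hlt : ‖s‖ ^ 2 < ‖z‖ ^ 2 := by linarith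
  nlinarith [norm_nonneg s, norm_nonneg z]
end

section
/- Let H be a finite-dimensional complex inner product space and ∂, ∂̄ linear endomorphisms of H satisfying ∂² = ∂̄² = 0 and ∂∂̄ + ∂̄∂ = 0, with adjoints ∂*, ∂̄*. Then the Green's operators of the Bott-Chern and Aeppli Laplacians satisfy G_BC ∘ (∂∂̄) = (∂∂̄) ∘ G_A and (∂∂̄)* ∘ G_BC = G_A ∘ (∂∂̄)*. -/
open scoped InnerProductSpace ComplexInnerProductSpace

open LinearMap

/-- The Aeppli Laplacian `□_A = ∂*∂̄*∂̄∂ + ∂̄∂∂*∂̄* + ∂̄∂*∂∂̄* + ∂∂̄*∂̄∂* + ∂̄∂̄* + ∂∂*`. -/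
noncomputable def aeppliLaplacian {H : Type*} [NormedAddCommGroup H] [InnerProductSpace ℂ H]
    [FiniteDimensional ℂ H] (d d' : Module.End ℂ H) : Module.End ℂ H :=
  adjoint d * adjoint d' * d' * d + d' * d * adjoint d * adjoint d'
    + d' * adjoint d * d * adjoint d' + d * adjoint d' * d' * adjoint d
    + d' * adjoint d' + d * adjoint d


lemma ddbar_key {R : Type*} [Ring R] (d d' a b : R)
    (hd : d * d = 0) (hd' : d' * d' = 0) (hdd' : d * d' + d' * d = 0)
    (ha : a * a = 0) (hb : b * b = 0) (hab : a * b + b * a = 0) :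
    (d * d' * b * a + b * a * d * d' + b * d * a * d' + a * d' * b * d
      + b * d' + a * d) * (d * d')
    = (d * d') * (a * b * d' * d + d' * d * a * b + d' * a * d * b + d * b * d' * a
      + d' * b + d * a) := by
  have e0 : d' * d = -(d * d') := eq_neg_of_add_eq_zero_right hdd'
  have f0 : a * b = -(b * a) := eq_neg_of_add_eq_zero_left hab
  have e : ∀ x : R, d' * (d * x) = -(d * (d' * x)) := fun x => by
    rw [← mul_assoc, e0, neg_mul, mul_assoc]
  have f : ∀ x : R, a * (b * x) = -(b * (a * x)) := fun x => by
    rw [← mul_assoc, f0, neg_mul, mul_assoc]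
  have hd2 : ∀ x : R, d * (d * x) = 0 := fun x => by rw [← mul_assoc, hd, zero_mul]
  have hd'2 : ∀ x : R, d' * (d' * x) = 0 := fun x => by rw [← mul_assoc, hd', zero_mul]
  have ha2 : ∀ x : R, a * (a * x) = 0 := fun x => by rw [← mul_assoc, ha, zero_mul]
  have hb2 : ∀ x : R, b * (b * x) = 0 := fun x => by rw [← mul_assoc, hb, zero_mul]
  simp only [mul_add, add_mul, mul_assoc]
  simp only [e, f, e0, f0, hd2, hd'2, ha2, hb2, hd, hd', ha, hb, mul_neg, neg_mul,
    mul_zero, zero_mul, neg_neg, add_zero, zero_add, neg_zero]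


lemma green_aux {H : Type*} [NormedAddCommGroup H] [InnerProductSpace ℂ H]
    [FiniteDimensional ℂ H] (L M T G₁ G₂ : Module.End ℂ H)
    (hLsa : LinearMap.adjoint L = L) (hMsa : LinearMap.adjoint M = M)
    (hcomm : L * T = T * M)
    (hGLker : ∀ x ∈ LinearMap.ker L, G₁ x = 0)
    (hGL : ∀ x : H, G₁ (L x) = x - (Submodule.orthogonalProjectionOnto (LinearMap.ker L) x : H))
    (hGMker : ∀ x ∈ LinearMap.ker M, G₂ x = 0)
    (hGM : ∀ x : H, G₂ (M x) = x - (Submodule.orthogonalProjectionOnto (LinearMap.ker M) x : H)) :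
    G₁ * T = T * G₂ := by
  -- range of a self-adjoint operator contains the orthogonal complement of its kernel
  have hrange : ∀ N : Module.End ℂ H, LinearMap.adjoint N = N →
      (LinearMap.ker N)ᗮ ≤ LinearMap.range N := by
    intro N hN
    have h1 : (LinearMap.range N)ᗮ ≤ LinearMap.ker N := by
      intro x hx
      have h0 : ⟪N (N x), x⟫_ℂ = 0 := (Submodule.mem_orthogonal _ x).mp hx (N (N x)) ⟨N x, rfl⟩
      have h2 : ⟪N x, N x⟫_ℂ = 0 := by
        rw [← LinearMap.adjoint_inner_left, hN]; exact h0
      exact LinearMap.mem_ker.mpr (inner_self_eq_zero.mp h2)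
    calc (LinearMap.ker N)ᗮ ≤ ((LinearMap.range N)ᗮ)ᗮ := Submodule.orthogonal_le h1
      _ = LinearMap.range N := Submodule.orthogonal_orthogonal _
  -- range of a self-adjoint operator is orthogonal to the kernel
  have hperp : ∀ (N : Module.End ℂ H), LinearMap.adjoint N = N →
      ∀ z : H, N z ∈ (LinearMap.ker N)ᗮ := by
    intro N hN z
    rw [Submodule.mem_orthogonal]
    intro u hu
    rw [← hN, LinearMap.adjoint_inner_right, LinearMap.mem_ker.mp hu,
      inner_zero_left]
  ext x
  simp only [Module.End.mul_apply]
  -- decompose x = p + M y with p in ker M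
  obtain ⟨y, hy⟩ := hrange M hMsa
    (by have h := Submodule.sub_starProjection_mem_orthogonal (K := LinearMap.ker M) x; rwa [Submodule.starProjection_apply] at h)
  set p : H := (Submodule.orthogonalProjectionOnto (LinearMap.ker M) x : H) with hpdef
  have hpker : p ∈ LinearMap.ker M := Submodule.coe_mem _
  have hxdecomp : x = p + M y := by rw [hy]; abel
  -- decompose y = q + M z
  obtain ⟨z, hz⟩ := hrange M hMsa
    (by have h := Submodule.sub_starProjection_mem_orthogonal (K := LinearMap.ker M) y; rwa [Submodule.starProjection_apply] at h)
  set q : H := (Submodule.orthogonalProjectionOnto (LinearMap.ker M) y : H) with hqdef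
  have hqker : q ∈ LinearMap.ker M := Submodule.coe_mem _
  have hydecomp : y = q + M z := by rw [hz]; abel
  -- T maps ker M into ker L
  have hTk : ∀ u : H, u ∈ LinearMap.ker M → T u ∈ LinearMap.ker L := by
    intro u hu
    have : L (T u) = T (M u) := congrFun (congrArg DFunLike.coe hcomm) u
    rw [LinearMap.mem_ker.mp hu, map_zero] at this
    exact LinearMap.mem_ker.mpr this
  have hTM : ∀ u : H, T (M u) = L (T u) :=
    fun u => (congrFun (congrArg DFunLike.coe hcomm) u).symm
  -- compute the projection of T y
  have hPTy : (Submodule.orthogonalProjectionOnto (LinearMap.ker L) (T y) : H) = T q := by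
    have h1 : T y = T q + L (T z) := by rw [hydecomp, map_add, hTM]
    rw [h1, map_add, Submodule.coe_add]
    rw [← Submodule.starProjection_apply, Submodule.starProjection_eq_self_iff.mpr (hTk q hqker),
      Submodule.orthogonalProjectionOnto_apply_of_mem_orthogonal
        (hperp L hLsa (T z))]
    simp
  calc G₁ (T x) = G₁ (T p) + G₁ (T (M y)) := by rw [hxdecomp, map_add, map_add]
    _ = G₁ (L (T y)) := by rw [hGLker _ (hTk p hpker), hTM, zero_add]
    _ = T y - T q := by rw [hGL, hPTy]
    _ = T (G₂ x) := by
        rw [hxdecomp, map_add, hGMker _ hpker, zero_add, hGM, map_sub, ← hqdef]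

/-- Let `H` be a finite-dimensional complex inner product space and `∂, ∂̄`
linear endomorphisms of `H` satisfying `∂² = ∂̄² = 0` and `∂∂̄ + ∂̄∂ = 0`, with adjoints
`∂*, ∂̄*`.  Let `G_BC` (resp. `G_A`) be the Green's operator of the Bott-Chern (resp. Aeppli)
Laplacian, i.e. the unique linear endomorphism vanishing on the kernel of the Laplacian and
satisfying `G □ x = x − P x`, where `P` is the orthogonal projection onto that kernel.  Then
`G_BC ∘ (∂∂̄) = (∂∂̄) ∘ G_A` and `(∂∂̄)* ∘ G_BC = G_A ∘ (∂∂̄)*` (where `(∂∂̄)* = ∂̄*∂*`). -/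
theorem green_commutes_ddbar {H : Type*} [NormedAddCommGroup H] [InnerProductSpace ℂ H]
    [FiniteDimensional ℂ H] (d d' : Module.End ℂ H)
    (hd : d * d = 0) (hd' : d' * d' = 0) (hdd' : d * d' + d' * d = 0)
    (GBC GA : Module.End ℂ H)
    (hGBCker : ∀ x ∈ LinearMap.ker (bottChernLaplacian d d'), GBC x = 0)
    (hGBC : ∀ x : H, GBC (bottChernLaplacian d d' x)
      = x - (Submodule.orthogonalProjectionOnto (LinearMap.ker (bottChernLaplacian d d')) x : H))
    (hGAker : ∀ x ∈ LinearMap.ker (aeppliLaplacian d d'), GA x = 0)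
    (hGA : ∀ x : H, GA (aeppliLaplacian d d' x)
      = x - (Submodule.orthogonalProjectionOnto (LinearMap.ker (aeppliLaplacian d d')) x : H)) :
    GBC * (d * d') = (d * d') * GA ∧
    (adjoint d' * adjoint d) * GBC = GA * (adjoint d' * adjoint d) := by
  set a := LinearMap.adjoint d with hadef
  set b := LinearMap.adjoint d' with hbdef
  have amul : ∀ f g : Module.End ℂ H,
      LinearMap.adjoint (f * g) = LinearMap.adjoint g * LinearMap.adjoint f := by
    intro f g
    rw [Module.End.mul_eq_comp, LinearMap.adjoint_comp, Module.End.mul_eq_comp]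
  have ha : a * a = 0 := by
    rw [hadef, ← amul, hd, map_zero]
  have hb : b * b = 0 := by
    rw [hbdef, ← amul, hd', map_zero]
  have hab : a * b + b * a = 0 := by
    have : LinearMap.adjoint (d * d' + d' * d) = 0 := by rw [hdd', map_zero]
    rw [map_add, amul, amul] at this
    rw [← hadef, ← hbdef] at this
    rw [add_comm]
    exact this
  have haa : LinearMap.adjoint a = d := by rw [hadef, LinearMap.adjoint_adjoint]
  have hbb : LinearMap.adjoint b = d' := by rw [hbdef, LinearMap.adjoint_adjoint]
  have hLsa : LinearMap.adjoint (bottChernLaplacian d d') = bottChernLaplacian d d' := by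
    simp only [bottChernLaplacian, map_add, amul, LinearMap.adjoint_adjoint, haa, hbb, ← hadef, ← hbdef,
      mul_assoc]
  have hMsa : LinearMap.adjoint (aeppliLaplacian d d') = aeppliLaplacian d d' := by
    simp only [aeppliLaplacian, map_add, amul, LinearMap.adjoint_adjoint, haa, hbb, ← hadef, ← hbdef,
      mul_assoc]
  have hcomm1 : bottChernLaplacian d d' * (d * d') = (d * d') * aeppliLaplacian d d' := by
    simpa only [bottChernLaplacian, aeppliLaplacian, ← hadef, ← hbdef] using
      ddbar_key d d' a b hd hd' hdd' ha hb hab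
  have hcomm2 : aeppliLaplacian d d' * (b * a) = (b * a) * bottChernLaplacian d d' := by
    have hk := ddbar_key a b d d' ha hb hab hd hd' hdd'
    have hk2 : aeppliLaplacian d d' * (a * b) = (a * b) * bottChernLaplacian d d' := by
      simpa only [bottChernLaplacian, aeppliLaplacian, ← hadef, ← hbdef] using hk
    have hba : b * a = -(a * b) := eq_neg_of_add_eq_zero_right hab
    rw [hba, mul_neg, neg_mul, hk2]
  constructor
  · exact green_aux (bottChernLaplacian d d') (aeppliLaplacian d d') (d * d') GBC GA
      hLsa hMsa hcomm1 hGBCker hGBC hGAker hGA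
  · exact (green_aux (aeppliLaplacian d d') (bottChernLaplacian d d') (b * a) GA GBC
      hMsa hLsa hcomm2 hGAker hGA hGBCker hGBC).symm
end

section
/- Let Λ^{•,•} be the bigraded exterior algebra over ℂ on six degree-one generators η¹, η², η³ of bidegree (1,0) and η̄¹, η̄², η̄³ of bidegree (0,1), equipped with the unique antiderivations ∂ (of bidegree (1,0)) and ∂̄ (of bidegree (0,1)) determined on generators by ∂η¹ = ∂η² = 0, ∂η³ = −η¹∧η², ∂η̄¹ = ∂η̄² = ∂η̄³ = 0, ∂̄η¹ = ∂̄η² = ∂̄η³ = 0, ∂̄η̄¹ = ∂̄η̄² = 0, ∂̄η̄³ = −η̄¹∧η̄². Then the element ω := η¹∧η²∧η̄¹ of bidegree (2,1) satisfies ∂ω = 0, ∂̄ω = 0 and ω = −∂(η³∧η̄¹), yet there is no θ of bidegree (1,0) with ω = ∂∂̄θ. Consequently, the natural map H^{2,1}_BC → H^{2,1}_∂ induced by the identity on this double complex is not injective. -/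
open LinearMap

/-- The exterior algebra over `ℂ` on six degree-one generators:
`η¹, η², η³` (of bidegree `(1,0)`) are `gen 0, gen 1, gen 2`, and
`η̄¹, η̄², η̄³` (of bidegree `(0,1)`) are `gen 3, gen 4, gen 5`. -/
abbrev IwasawaAlg : Type := ExteriorAlgebra ℂ (Fin 6 → ℂ)

/-- The six degree-one generators. -/
noncomputable def gen (i : Fin 6) : IwasawaAlg :=
  ExteriorAlgebra.ι ℂ (Pi.single i 1)

/-- The bidegree-`(1,0)` part: the span of `η¹, η², η³`. -/
noncomputable def Lam10 : Submodule ℂ IwasawaAlg :=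
  Submodule.span ℂ {gen 0, gen 1, gen 2}

/-- The bidegree-`(1,1)` part: the span of the `ηⁱ ∧ η̄ʲ`. -/
noncomputable def Lam11 : Submodule ℂ IwasawaAlg :=
  Submodule.span ℂ
    {gen 0 * gen 3, gen 0 * gen 4, gen 0 * gen 5,
     gen 1 * gen 3, gen 1 * gen 4, gen 1 * gen 5,
     gen 2 * gen 3, gen 2 * gen 4, gen 2 * gen 5}

/-- The bidegree-`(2,1)` part: the span of the `ηⁱ ∧ ηʲ ∧ η̄ᵏ`. -/
noncomputable def Lam21 : Submodule ℂ IwasawaAlg :=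
  Submodule.span ℂ
    {gen 0 * gen 1 * gen 3, gen 0 * gen 1 * gen 4, gen 0 * gen 1 * gen 5,
     gen 0 * gen 2 * gen 3, gen 0 * gen 2 * gen 4, gen 0 * gen 2 * gen 5,
     gen 1 * gen 2 * gen 3, gen 1 * gen 2 * gen 4, gen 1 * gen 2 * gen 5}

/-- `∂`- and `∂̄`-closed `(2,1)`-elements. -/
noncomputable def ZBC21 (D1 D2 : IwasawaAlg →ₗ[ℂ] IwasawaAlg) : Submodule ℂ IwasawaAlg :=
  Lam21 ⊓ LinearMap.ker D1 ⊓ LinearMap.ker D2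

/-- `∂`-closed `(2,1)`-elements. -/
noncomputable def ZDel21 (D1 : IwasawaAlg →ₗ[ℂ] IwasawaAlg) : Submodule ℂ IwasawaAlg :=
  Lam21 ⊓ LinearMap.ker D1

/-- `∂∂̄`-exact elements coming from `Λ^{1,0}`. -/
noncomputable def BBC21 (D1 D2 : IwasawaAlg →ₗ[ℂ] IwasawaAlg) : Submodule ℂ IwasawaAlg :=
  Submodule.map (D1 ∘ₗ D2) Lam10

/-- `∂`-exact elements coming from `Λ^{1,1}`. -/
noncomputable def BDel21 (D1 : IwasawaAlg →ₗ[ℂ] IwasawaAlg) : Submodule ℂ IwasawaAlg :=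
  Submodule.map D1 Lam11

/-- The Bott-Chern cohomology `H^{2,1}_BC`. -/
noncomputable abbrev HBC21 (D1 D2 : IwasawaAlg →ₗ[ℂ] IwasawaAlg) :=
  ZBC21 D1 D2 ⧸ ((BBC21 D1 D2).comap (ZBC21 D1 D2).subtype)

/-- The `∂`-cohomology `H^{2,1}_∂`. -/
noncomputable abbrev HDel21 (D1 : IwasawaAlg →ₗ[ℂ] IwasawaAlg) :=
  ZDel21 D1 ⧸ ((BDel21 D1).comap (ZDel21 D1).subtype)

/-- The natural map `ι_{BC,∂} : H^{2,1}_BC → H^{2,1}_∂` induced by the identity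
(well defined since `∂̄` kills the generators of bidegree `(1,0)`). -/
noncomputable def iota21 (D1 D2 : IwasawaAlg →ₗ[ℂ] IwasawaAlg)
    (hD2a : D2 (gen 0) = 0) (hD2b : D2 (gen 1) = 0) (hD2c : D2 (gen 2) = 0) :
    HBC21 D1 D2 →ₗ[ℂ] HDel21 D1 :=
  Submodule.mapQ _ _ (Submodule.inclusion inf_le_left)
    (by
      have hker : Lam10 ≤ LinearMap.ker D2 := by
        rw [Lam10, Submodule.span_le]
        rintro x hx
        simp only [Set.mem_insert_iff, Set.mem_singleton_iff] at hx
        rcases hx with rfl | rfl | rfl <;>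
          simp [LinearMap.mem_ker, hD2a, hD2b, hD2c]
      rintro ⟨x, hx⟩ hmem
      obtain ⟨θ, hθ, hθx⟩ := hmem
      have h0 : D2 θ = 0 := hker hθ
      have hθx' : (D1 ∘ₗ D2) θ = x := hθx
      have hx0 : x = 0 := by
        rw [← hθx', LinearMap.comp_apply, h0, map_zero]
      show x ∈ BDel21 D1
      rw [hx0]
      exact (BDel21 D1).zero_mem)

noncomputable def detFun : (Fin 6 → ℂ) [⋀^Fin 3]→ₗ[ℂ] ℂ :=
  (Matrix.detRowAlternating).compLinearMap
    (LinearMap.funLeft ℂ ℂ (![0, 1, 3] : Fin 3 → Fin 6))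

noncomputable def Fam : ∀ i, (Fin 6 → ℂ) [⋀^Fin i]→ₗ[ℂ] ℂ
  | 3 => detFun
  | _ => 0

theorem omega_ne_zero : gen 0 * gen 1 * gen 3 ≠ 0 := by
  intro h
  have h2 := congrArg (ExteriorAlgebra.liftAlternating Fam) h
  rw [map_zero] at h2
  rw [show gen 0 * gen 1 * gen 3
      = ExteriorAlgebra.ι ℂ (Pi.single 0 1) *
        (ExteriorAlgebra.ι ℂ (Pi.single 1 1) *
          (ExteriorAlgebra.ι ℂ (Pi.single 3 1) * 1)) by
    simp [gen, mul_assoc]] at h2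
  rw [ExteriorAlgebra.liftAlternating_ι_mul, ExteriorAlgebra.liftAlternating_ι_mul,
    ExteriorAlgebra.liftAlternating_ι_mul, ExteriorAlgebra.liftAlternating_one] at h2
  simp only [Fam, AlternatingMap.curryLeft, detFun, AlternatingMap.compLinearMap_apply,
    AlternatingMap.coe_mk, MultilinearMap.coe_mk,
    LinearMap.coe_mk, AddHom.coe_mk] at h2
  have h3 : (Matrix.of fun i j =>
      (LinearMap.funLeft ℂ ℂ (![0, 1, 3] : Fin 3 → Fin 6))
        (Matrix.vecCons (Pi.single 0 1) (Matrix.vecCons (Pi.single 1 1)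
          (Matrix.vecCons (Pi.single 3 1) 0)) i) j).det = 0 := h2
  rw [Matrix.det_fin_three] at h3
  simp only [Matrix.of_apply, LinearMap.funLeft_apply] at h3
  norm_num [Matrix.cons_val_zero, Matrix.cons_val_one, Pi.single_apply] at h3
  rw [if_neg (by decide), if_neg (by decide)] at h3
  norm_num at h3
  simp [Matrix.cons_val_two] at h3


set_option maxHeartbeats 1600000 in
/-- In the (bigraded) exterior algebra over `ℂ` on generators
`η¹, η², η³` of bidegree `(1,0)` and `η̄¹, η̄², η̄³` of bidegree `(0,1)`, equipped with the
unique antiderivations `∂` and `∂̄` determined on generators by `∂η¹ = ∂η² = 0`,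
`∂η³ = −η¹∧η²`, `∂η̄ⁱ = 0`, `∂̄ηⁱ = 0`, `∂̄η̄¹ = ∂̄η̄² = 0`, `∂̄η̄³ = −η̄¹∧η̄²`, the element
`ω := η¹∧η²∧η̄¹` of bidegree `(2,1)` satisfies `∂ω = 0`, `∂̄ω = 0` and `ω = −∂(η³∧η̄¹)`,
yet there is no `θ` of bidegree `(1,0)` with `ω = ∂∂̄θ`.  Consequently, the natural map
`H^{2,1}_BC → H^{2,1}_∂` induced by the identity is not injective. -/
theorem iwasawa_mild_fails
    (D1 D2 : IwasawaAlg →ₗ[ℂ] IwasawaAlg)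
    (hone1 : D1 1 = 0) (hone2 : D2 1 = 0)
    (hleib1 : ∀ (v : Fin 6 → ℂ) (y : IwasawaAlg),
      D1 (ExteriorAlgebra.ι ℂ v * y)
        = D1 (ExteriorAlgebra.ι ℂ v) * y - ExteriorAlgebra.ι ℂ v * D1 y)
    (hleib2 : ∀ (v : Fin 6 → ℂ) (y : IwasawaAlg),
      D2 (ExteriorAlgebra.ι ℂ v * y)
        = D2 (ExteriorAlgebra.ι ℂ v) * y - ExteriorAlgebra.ι ℂ v * D2 y)
    (hD1a : D1 (gen 0) = 0) (hD1b : D1 (gen 1) = 0)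
    (hD1c : D1 (gen 2) = -(gen 0 * gen 1))
    (hD1d : D1 (gen 3) = 0) (hD1e : D1 (gen 4) = 0) (hD1f : D1 (gen 5) = 0)
    (hD2a : D2 (gen 0) = 0) (hD2b : D2 (gen 1) = 0) (hD2c : D2 (gen 2) = 0)
    (hD2d : D2 (gen 3) = 0) (hD2e : D2 (gen 4) = 0)
    (hD2f : D2 (gen 5) = -(gen 3 * gen 4)) :
    D1 (gen 0 * gen 1 * gen 3) = 0 ∧
    D2 (gen 0 * gen 1 * gen 3) = 0 ∧
    gen 0 * gen 1 * gen 3 = -D1 (gen 2 * gen 3) ∧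
    (¬ ∃ θ ∈ Lam10, gen 0 * gen 1 * gen 3 = D1 (D2 θ)) ∧
    ¬ Function.Injective (iota21 D1 D2 hD2a hD2b hD2c) := by
  have L1 : ∀ (i : Fin 6) (y : IwasawaAlg),
      D1 (gen i * y) = D1 (gen i) * y - gen i * D1 y := fun i y => hleib1 _ y
  have L2 : ∀ (i : Fin 6) (y : IwasawaAlg),
      D2 (gen i * y) = D2 (gen i) * y - gen i * D2 y := fun i y => hleib2 _ y
  have hw1 : D1 (gen 0 * gen 1 * gen 3) = 0 := by
    rw [mul_assoc, L1, L1, hD1a, hD1b, hD1d]; simp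
  have hw2 : D2 (gen 0 * gen 1 * gen 3) = 0 := by
    rw [mul_assoc, L2, L2, hD2a, hD2b, hD2d]; simp
  have h3 : gen 0 * gen 1 * gen 3 = -D1 (gen 2 * gen 3) := by
    rw [L1, hD1c, hD1d]; simp [mul_assoc]
  have hker2 : Lam10 ≤ LinearMap.ker D2 := by
    rw [Lam10, Submodule.span_le]
    rintro x hx
    simp only [Set.mem_insert_iff, Set.mem_singleton_iff] at hx
    rcases hx with rfl | rfl | rfl <;> simp [LinearMap.mem_ker, hD2a, hD2b, hD2c]
  have h4 : ¬ ∃ θ ∈ Lam10, gen 0 * gen 1 * gen 3 = D1 (D2 θ) := by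
    rintro ⟨θ, hθ, heq⟩
    have h0 : D2 θ = 0 := hker2 hθ
    rw [h0, map_zero] at heq
    exact omega_ne_zero heq
  refine ⟨hw1, hw2, h3, h4, ?_⟩
  intro hinj
  have hmem : gen 0 * gen 1 * gen 3 ∈ ZBC21 D1 D2 :=
    ⟨⟨Submodule.subset_span (Set.mem_insert _ _), hw1⟩, hw2⟩
  set x : ZBC21 D1 D2 := ⟨gen 0 * gen 1 * gen 3, hmem⟩ with hx
  have hzero : iota21 D1 D2 hD2a hD2b hD2c (Submodule.Quotient.mk x) = 0 := by
    unfold iota21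
    rw [Submodule.mapQ_apply, Submodule.Quotient.mk_eq_zero]
    have hmem11 : gen 2 * gen 3 ∈ ({gen 0 * gen 3, gen 0 * gen 4, gen 0 * gen 5,
        gen 1 * gen 3, gen 1 * gen 4, gen 1 * gen 5,
        gen 2 * gen 3, gen 2 * gen 4, gen 2 * gen 5} : Set IwasawaAlg) :=
      Set.mem_insert_of_mem _ (Set.mem_insert_of_mem _ (Set.mem_insert_of_mem _
        (Set.mem_insert_of_mem _ (Set.mem_insert_of_mem _ (Set.mem_insert_of_mem _
          (Set.mem_insert _ _))))))
    exact ⟨-(gen 2 * gen 3), Submodule.neg_mem _ (Submodule.subset_span hmem11),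
      (map_neg D1 _).trans h3.symm⟩
  have hx0 : Submodule.Quotient.mk x = (0 : HBC21 D1 D2) := by
    apply hinj
    rw [hzero, map_zero]
  rw [Submodule.Quotient.mk_eq_zero, Submodule.mem_comap, Submodule.subtype_apply] at hx0
  obtain ⟨θ, hθ, hθeq⟩ := hx0
  exact h4 ⟨θ, hθ, hθeq.symm⟩
end
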